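/- Under the extended Case-C2 setup, every path from s_1 to d_1 contains v_1 or v_3; consequently (since every path from s_2 to d_1 contains v_1) the removal of the pair {v_1,v_3} disconnects d_1 from both sources. -/

import Mathlib

open List

/-- `IsPath E p u w` : the nonempty list `p` of vertices is a directed path
from `u` to `w` with respect to the edge relation `E`. -/
def IsPath {V : Type*} (E : V → V → Prop) (p : List V) (u w : V) : Prop :=
  p ≠ [] ∧ p.head? = some u ∧ p.getLast? = some w ∧ p.Chain' E

/-- `Reaches E u w` (written `u ~> w`) : there is a directed path from `u` to `w`. -/
def Reaches {V : Type*} (E : V → V → Prop) (u w : V) : Prop :=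
  ∃ p, IsPath E p u w

/-- A two-unicast layered network: a finite directed graph, with two sources
`s1, s2` and two destinations `d1, d2` (all four distinct), vertices partitioned
into layers `1, ..., r` such that every edge goes from a layer to the next one,
the first layer is `{s1, s2}`, the last layer is `{d1, d2}`, and each source
reaches its corresponding destination. -/
structure TwoUnicastNetwork (V : Type*) [Fintype V] where
  E : V → V → Prop
  s1 : V
  s2 : V
  d1 : V
  d2 : V
  r : ℕ
  layer : V → ℕ
  layer_pos : ∀ v, 1 ≤ layer v
  layer_le : ∀ v, layer v ≤ r
  edge_layer : ∀ u w, E u w → layer w = layer u + 1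
  s_ne : s1 ≠ s2
  d_ne : d1 ≠ d2
  sd_ne : ∀ s d, (s = s1 ∨ s = s2) → (d = d1 ∨ d = d2) → s ≠ d
  first_layer : ∀ v, layer v = 1 ↔ v = s1 ∨ v = s2
  last_layer : ∀ v, layer v = r ↔ v = d1 ∨ v = d2
  conn1 : Reaches E s1 d1
  conn2 : Reaches E s2 d2

/-- `InterferesOn N S Ri srcOther v` : within the induced subgraph `G[S]`, the
node `v` causes interference on the path `Ri` : `v ∈ S`, `v ∉ Ri`, there is an
edge (inside `G[S]`) from `v` into a node of `Ri`, and there is a path from the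
other source `srcOther` to `v` lying inside `G[S]` and disjoint from `Ri`. -/
def InterferesOn {V : Type*} [Fintype V] (N : TwoUnicastNetwork V) (S : Set V)
    (Ri : List V) (srcOther : V) (v : V) : Prop :=
  v ∈ S ∧ v ∉ Ri ∧ (∃ w ∈ Ri, w ∈ S ∧ N.E v w) ∧
    ∃ q, IsPath N.E q srcOther v ∧ (∀ x ∈ q, x ∈ S) ∧ ∀ x ∈ q, x ∉ Ri

/-- `n_i(G[S])` : the number of nodes causing interference on `Ri` within the
induced subgraph `G[S]`, the interfering path coming from `srcOther`. -/
noncomputable def nInterf {V : Type*} [Fintype V] (N : TwoUnicastNetwork V)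
    (S : Set V) (Ri : List V) (srcOther : V) : ℕ :=
  {v | InterferesOn N S Ri srcOther v}.ncard

/-- `n_i^D` : the number of nodes of the other path `Rother` causing (direct)
interference on `Ri` in `G`. -/
noncomputable def nDirect {V : Type*} [Fintype V] (N : TwoUnicastNetwork V)
    (Ri Rother : List V) (srcOther : V) : ℕ :=
  {v | InterferesOn N Set.univ Ri srcOther v ∧ v ∈ Rother}.ncard

/-- The pair `(R1, R2)` (paths `s1 → d1` and `s2 → d2`) has manageable
interference: there is `S ⊇ R1 ∪ R2` with `n_1(G[S]) ≠ 1` and `n_2(G[S]) ≠ 1`. -/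
def Manageable {V : Type*} [Fintype V] (N : TwoUnicastNetwork V)
    (R1 R2 : List V) : Prop :=
  ∃ S : Set V, (∀ x ∈ R1, x ∈ S) ∧ (∀ x ∈ R2, x ∈ S) ∧
    nInterf N S R1 N.s2 ≠ 1 ∧ nInterf N S R2 N.s1 ≠ 1

/-- The pair `(R1, R2)` has `(s1,d1)`-manageable interference. -/
def Manageable1 {V : Type*} [Fintype V] (N : TwoUnicastNetwork V)
    (R1 R2 : List V) : Prop :=
  ∃ S : Set V, (∀ x ∈ R1, x ∈ S) ∧ (∀ x ∈ R2, x ∈ S) ∧ nInterf N S R1 N.s2 ≠ 1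

/-- The pair `(R1, R2)` has `(s2,d2)`-manageable interference. -/
def Manageable2 {V : Type*} [Fintype V] (N : TwoUnicastNetwork V)
    (R1 R2 : List V) : Prop :=
  ∃ S : Set V, (∀ x ∈ R1, x ∈ S) ∧ (∀ x ∈ R2, x ∈ S) ∧ nInterf N S R2 N.s1 ≠ 1

/-- Removal of the vertex `v` disconnects `a` from `b` :
every path from `a` to `b` contains `v`. -/
def CutVert {V : Type*} [Fintype V] (N : TwoUnicastNetwork V) (v a b : V) : Prop :=
  ∀ p, IsPath N.E p a b → v ∈ p


/- If `v1 ∉ p` and `v3 ∉ p` for a path `p` from `s1` to `d1`, take `S = p ∪ P22`. Since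
`v3` separates `s1` from `d2`, `p` is disjoint from `P22` and nothing in `p` interferes on `P22`;
since `v1` separates `s2` from `d1`, nothing in `P22` interferes on `p`. Both counts in `G[S]` are
then `0`, so `(p, P22)` has manageable interference, which Case C2 excludes. -/

namespace IsPath

variable {V : Type*} {E : V → V → Prop} {p q : List V} {a b x : V}

lemma cons (hp : IsPath E p x b) (hax : E a x) : IsPath E (a :: p) a b := by
  obtain ⟨hne, hh, hl, hc⟩ := hp
  refine ⟨List.cons_ne_nil _ _, rfl, ?_, List.isChain_cons.mpr ⟨?_, hc⟩⟩
  · simp [List.getLast?_cons, hl]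
  · simpa [hh] using hax

lemma append_tail (hp : IsPath E p a x) (hq : IsPath E q x b) :
    IsPath E (p ++ q.tail) a b := by
  obtain ⟨hne, hh, hl, hc⟩ := hp
  cases q with
  | nil => exact absurd rfl hq.1
  | cons y t =>
    obtain ⟨-, hh', hl', hc'⟩ := hq
    obtain rfl : y = x := by simpa using hh'
    obtain ⟨hxt, ht⟩ := List.isChain_cons.mp hc'
    refine ⟨by simp [hne], by simpa [List.head?_append, hne] using hh, ?_,
      hc.append ht (by simpa [hl] using hxt)⟩
    cases t with
    | nil => simpa [hl] using hl'
    | cons z t => simpa [List.getLast?_append] using hl'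

lemma exists_split (hp : IsPath E p a b) (hx : x ∈ p) :
    ∃ p₁ p₂, IsPath E p₁ a x ∧ IsPath E p₂ x b ∧ p₁ ⊆ p ∧ p₂ ⊆ p := by
  obtain ⟨l₁, l₂, rfl⟩ := List.append_of_mem hx
  obtain ⟨-, hh, hl, hc⟩ := hp
  refine ⟨l₁ ++ [x], x :: l₂, ⟨by simp, ?_, by simp, hc.prefix ⟨l₂, by simp⟩⟩,
    ⟨by simp, rfl, ?_, hc.suffix ⟨l₁, rfl⟩⟩, ?_, ?_⟩
  · cases l₁ <;> simpa using hh
  · simpa [List.getLast?_append] using hl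
  · intro y; simp only [List.mem_append, List.mem_cons]; tauto
  · intro y; simp only [List.mem_append, List.mem_cons]; tauto

end IsPath

section Separation

variable {V : Type*} {E : V → V → Prop} {p q : List V} {a a' b b' c x : V}

lemma mem_or_mem_of_forall_mem_isPath (hcut : ∀ r, IsPath E r a b → c ∈ r)
    (hp : IsPath E p a x) (hq : IsPath E q x b) : c ∈ p ∨ c ∈ q :=
  (List.mem_append.mp (hcut _ (hp.append_tail hq))).imp_right List.mem_of_mem_tail

lemma disjoint_of_forall_mem_isPath (hp : IsPath E p a b) (hq : IsPath E q a' b')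
    (hcut : ∀ r, IsPath E r a b' → c ∈ r) (hcp : c ∉ p) (hcq : c ∉ q) : p.Disjoint q := by
  intro x hxp hxq
  obtain ⟨p₁, -, hp₁, -, hp₁p, -⟩ := hp.exists_split hxp
  obtain ⟨-, q₂, -, hq₂, -, hq₂q⟩ := hq.exists_split hxq
  rcases mem_or_mem_of_forall_mem_isPath hcut hp₁ hq₂ with h | h
  exacts [hcp (hp₁p h), hcq (hq₂q h)]

end Separation

section Interference

variable {V : Type*} [Fintype V] (N : TwoUnicastNetwork V) {R Q : List V} {src src' dst c : V}

/-- An interfering node `v` yields a path `src' ⇝ v → w ⇝ dst` through `R ∪ Q` whose part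
before `w` avoids `R`; a vertex outside `R ∪ Q` that separates `src'` from `dst` rules this out. -/
lemma not_interferesOn_of_forall_mem_isPath (hR : IsPath N.E R src dst)
    (hcut : ∀ r, IsPath N.E r src' dst → c ∈ r) (hcR : c ∉ R) (hcQ : c ∉ Q) (v : V) :
    ¬ InterferesOn N {x | x ∈ R ∨ x ∈ Q} R src' v := by
  rintro ⟨-, -, ⟨w, hwR, -, hvw⟩, q, hq, hqS, hqR⟩
  obtain ⟨-, R₂, -, hR₂, -, hR₂R⟩ := hR.exists_split hwR
  rcases List.mem_append.mp (hcut _ (hq.append_tail (hR₂.cons hvw))) with h | h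
  · exact hcQ ((hqS c h).resolve_left (hqR c h))
  · exact hcR (hR₂R h)

lemma nInterf_eq_zero_of_forall_mem_isPath (hR : IsPath N.E R src dst)
    (hcut : ∀ r, IsPath N.E r src' dst → c ∈ r) (hcR : c ∉ R) (hcQ : c ∉ Q) :
    nInterf N {x | x ∈ R ∨ x ∈ Q} R src' = 0 := by
  simp [nInterf, not_interferesOn_of_forall_mem_isPath N hR hcut hcR hcQ]

lemma manageable_of_forall_mem_isPath {R₁ R₂ : List V} {c₁ c₂ : V}
    (hR₁ : IsPath N.E R₁ N.s1 N.d1) (hR₂ : IsPath N.E R₂ N.s2 N.d2)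
    (hcut₁ : ∀ r, IsPath N.E r N.s2 N.d1 → c₁ ∈ r) (hcut₂ : ∀ r, IsPath N.E r N.s1 N.d2 → c₂ ∈ r)
    (hc₁R₁ : c₁ ∉ R₁) (hc₁R₂ : c₁ ∉ R₂) (hc₂R₁ : c₂ ∉ R₁) (hc₂R₂ : c₂ ∉ R₂) :
    Manageable N R₁ R₂ := by
  refine ⟨{x | x ∈ R₁ ∨ x ∈ R₂}, fun x => Or.inl, fun x => Or.inr, ?_, ?_⟩
  · rw [nInterf_eq_zero_of_forall_mem_isPath N hR₁ hcut₁ hc₁R₁ hc₁R₂]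
    exact zero_ne_one
  · have hS : {x | x ∈ R₁ ∨ x ∈ R₂} = {x | x ∈ R₂ ∨ x ∈ R₁} := by
      ext; exact or_comm
    rw [hS, nInterf_eq_zero_of_forall_mem_isPath N hR₂ hcut₂ hc₂R₂ hc₂R₁]
    exact zero_ne_one

end Interference

theorem statement14_general {V : Type*} [Fintype V]
    (N : TwoUnicastNetwork V)
    (P11 P22 : List V)
    (v1 v2 : V)
    (hP22 : IsPath N.E P22 N.s2 N.d2)
    (hdisj : P11.Disjoint P22)
    (hNoMan : ∀ R1 R2 : List V, IsPath N.E R1 N.s1 N.d1 → IsPath N.E R2 N.s2 N.d2 →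
      R1.Disjoint R2 → ¬ Manageable N R1 R2)
    (hv1P11 : v1 ∈ P11)
    (Q11 : List V)
    (v3 v4 : V)
    (hP21cut : ∀ p : List V, IsPath N.E p N.s2 N.d1 → v2 ∈ p ∧ v1 ∈ p)
    (hQ11disj : Q11.Disjoint P22)
    (hv3Q11 : v3 ∈ Q11)
    (hP12cut : ∀ p : List V, IsPath N.E p N.s1 N.d2 → v3 ∈ p ∧ v4 ∈ p) :
    (∀ p : List V, IsPath N.E p N.s1 N.d1 → v1 ∈ p ∨ v3 ∈ p) ∧
    (∀ p : List V, IsPath N.E p N.s2 N.d1 → v1 ∈ p ∨ v3 ∈ p) := by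
  have hv1P22 : v1 ∉ P22 := fun h => hdisj hv1P11 h
  have hv3P22 : v3 ∉ P22 := fun h => hQ11disj hv3Q11 h
  have hcut₁ : ∀ p, IsPath N.E p N.s2 N.d1 → v1 ∈ p := fun p hp => (hP21cut p hp).2
  have hcut₂ : ∀ p, IsPath N.E p N.s1 N.d2 → v3 ∈ p := fun p hp => (hP12cut p hp).1
  refine ⟨fun p hp => ?_, fun p hp => Or.inl (hcut₁ p hp)⟩
  by_contra! ⟨hv1p, hv3p⟩
  exact hNoMan p P22 hp hP22 (disjoint_of_forall_mem_isPath hp hP22 hcut₂ hv3p hv3P22)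
    (manageable_of_forall_mem_isPath N hp hP22 hcut₁ hcut₂ hv1p hv1P22 hv3p hv3P22)

theorem statement14 {V : Type*} [Fintype V]
    (N : TwoUnicastNetwork V)
    (P11 P22 : List V)
    (v1 v2 : V)
    (hP11 : IsPath N.E P11 N.s1 N.d1)
    (hP22 : IsPath N.E P22 N.s2 N.d2)
    (hdisj : P11.Disjoint P22)
    (hNoMan : ∀ R1 R2 : List V, IsPath N.E R1 N.s1 N.d1 → IsPath N.E R2 N.s2 N.d2 →
      R1.Disjoint R2 → ¬ Manageable N R1 R2)
    (hn1 : nInterf N Set.univ P11 N.s2 = 1)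
    (hn1D : nDirect N P11 P22 N.s2 = 1)
    (hv2unique : {v | InterferesOn N Set.univ P11 N.s2 v} = {v2})
    (hv2P22 : v2 ∈ P22)
    (hv1P11 : v1 ∈ P11)
    (hv2v1 : N.E v2 v1)
    (hedgeunique : ∀ u ∈ P22, ∀ w ∈ P11, N.E u w → u = v2 ∧ w = v1)
    (Q11 Z11 : List V)
    (v3 v4 : V)
    (hP21cut : ∀ p : List V, IsPath N.E p N.s2 N.d1 → v2 ∈ p ∧ v1 ∈ p)
    (hQ11 : IsPath N.E Q11 N.s1 N.d1)
    (hv1Q11 : v1 ∉ Q11)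
    (hQ11disj : Q11.Disjoint P22)
    (hQnoDirect : {v | InterferesOn N Set.univ Q11 N.s2 v ∧ v ∈ P22} = ∅)
    (hv3Q11 : v3 ∈ Q11)
    (hv3unique : {v | InterferesOn N Set.univ P22 N.s1 v ∧ v ∈ Q11} = {v3})
    (hv4P22 : v4 ∈ P22)
    (hv3v4 : N.E v3 v4)
    (hv3v4unique : ∀ w ∈ P22, N.E v3 w → w = v4)
    (hP12cut : ∀ p : List V, IsPath N.E p N.s1 N.d2 → v3 ∈ p ∧ v4 ∈ p)
    (hZ11 : IsPath N.E Z11 N.s1 N.d1)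
    (hv3Z11 : v3 ∉ Z11)
    (hv1Z11 : v1 ∈ Z11)
    (hZ11disj : Z11.Disjoint P22)
    (hZnoDirect : {v | InterferesOn N Set.univ P22 N.s1 v ∧ v ∈ Z11} = ∅)
    (hv2Zunique : {v | InterferesOn N Set.univ Z11 N.s2 v ∧ v ∈ P22} = {v2})
    (hv2v1unique : ∀ w ∈ Z11, N.E v2 w → w = v1) :
    (∀ p : List V, IsPath N.E p N.s1 N.d1 → v1 ∈ p ∨ v3 ∈ p) ∧
    (∀ p : List V, IsPath N.E p N.s2 N.d1 → v1 ∈ p ∨ v3 ∈ p) :=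
  statement14_general N P11 P22 v1 v2 hP22 hdisj hNoMan hv1P11 Q11 v3 v4 hP21cut hQ11disj hv3Q11
    hP12cut
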